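/- Let d ≥ 1, t ≥ 1 be integers and c > 0. For τ = 1, …, t, let z_τ, ε_τ ∈ ℝᵈ, y_τ ∈ ℝ, and E_τ a real d×d matrix; set x_τ = z_τ + ε_τ, Z = Σ_τ (x_τ x_τᵀ − E_τ), Y = Σ_τ y_τ x_τ, N₁ = Σ_τ z_τ ε_τᵀ, N₂ = Σ_τ (ε_τ ε_τᵀ − E_τ), N₃ = Σ_τ (y_τ − z_τᵀθ) x_τ, where θ ∈ ℝᵈ satisfies ‖θ‖₂ ≤ 1. Suppose Z = U Λ Uᵀ with U orthogonal and Λ diagonal, and let S ⊆ {1, …, d} be such that Λᵢᵢ ≥ c for all i ∈ S; let U_S and Λ_S be the corresponding column and diagonal submatrices. Then ‖U_S Λ_S⁻¹ U_Sᵀ (Y − Zθ)‖₂ ≤ c⁻¹ (‖N₁‖₂ + ‖N₂‖₂ + ‖N₃‖₂). -/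

import Mathlib

open Matrix

/-- The spectral norm (ℓ₂→ℓ₂ operator norm, i.e. largest singular value) of a real matrix. -/
noncomputable def specNorm {m n : Type*} [Fintype m] [Fintype n] [DecidableEq n]
    (A : Matrix m n ℝ) : ℝ :=
  ‖LinearMap.toContinuousLinearMap (Matrix.toEuclideanLin A)‖

/-- The Euclidean norm of a vector in `ℝᵈ`. -/
noncomputable def evNorm {n : Type*} [Fintype n] (v : n → ℝ) : ℝ :=
  Real.sqrt (∑ i, v i ^ 2)

/-!
The residual splits as `Y - Zθ = N₃ - N₁θ - N₂θ`: the `E_τ` cancel and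
`x_τ x_τᵀ θ = (z_τᵀθ) x_τ + (ε_τᵀθ)(z_τ + ε_τ)`. Since `‖θ‖₂ ≤ 1` its norm is at most
`‖N₁‖₂ + ‖N₂‖₂ + ‖N₃‖₂`. The truncated pseudo-inverse has operator norm at most `c⁻¹`:
`U_S` has orthonormal columns, so `U_S` is an isometry and `U_Sᵀ` a contraction, and the
entries of `Λ_S⁻¹` lie in `(0, c⁻¹]`.
-/

section EuclideanNorm

variable {m n : Type*} [Fintype m] [Fintype n]

lemma evNorm_eq_norm (v : n → ℝ) : evNorm v = ‖WithLp.toLp 2 v‖ := by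
  simp [evNorm, EuclideanSpace.norm_eq]

lemma evNorm_nonneg (v : n → ℝ) : 0 ≤ evNorm v :=
  Real.sqrt_nonneg _

lemma evNorm_sq (v : n → ℝ) : evNorm v ^ 2 = v ⬝ᵥ v := by
  rw [evNorm, Real.sq_sqrt (by positivity)]
  simp [dotProduct, sq]

lemma evNorm_sub_le (a b : n → ℝ) : evNorm (a - b) ≤ evNorm a + evNorm b := by
  rw [evNorm_eq_norm, evNorm_eq_norm, evNorm_eq_norm, WithLp.toLp_sub]
  exact norm_sub_le _ _

lemma dotProduct_le_evNorm_mul_evNorm (a b : n → ℝ) : a ⬝ᵥ b ≤ evNorm a * evNorm b := by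
  simpa [evNorm_eq_norm, PiLp.inner_apply, dotProduct, mul_comm] using
    real_inner_le_norm (WithLp.toLp 2 a) (WithLp.toLp 2 b)

lemma evNorm_mulVec_le [DecidableEq n] (A : Matrix m n ℝ) (v : n → ℝ) :
    evNorm (A *ᵥ v) ≤ specNorm A * evNorm v := by
  rw [evNorm_eq_norm, evNorm_eq_norm]
  exact (Matrix.toEuclideanLin A).toContinuousLinearMap.le_opNorm (WithLp.toLp 2 v)

lemma evNorm_mulVec_le_specNorm [DecidableEq n] (A : Matrix m n ℝ) {v : n → ℝ}
    (hv : evNorm v ≤ 1) : evNorm (A *ᵥ v) ≤ specNorm A :=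
  (evNorm_mulVec_le A v).trans <| mul_le_of_le_one_right (norm_nonneg _) hv

lemma evNorm_mulVec_of_transpose_mul_self [DecidableEq n] {A : Matrix m n ℝ} (hA : Aᵀ * A = 1)
    (v : n → ℝ) : evNorm (A *ᵥ v) = evNorm v := by
  have hsq : evNorm (A *ᵥ v) ^ 2 = evNorm v ^ 2 := by
    rw [evNorm_sq, evNorm_sq, dotProduct_mulVec, ← mulVec_transpose, mulVec_mulVec, hA,
      one_mulVec]
  exact (pow_left_inj₀ (evNorm_nonneg _) (evNorm_nonneg _) two_ne_zero).mp hsq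

lemma evNorm_transpose_mulVec_le [DecidableEq n] {A : Matrix m n ℝ} (hA : Aᵀ * A = 1)
    (w : m → ℝ) : evNorm (Aᵀ *ᵥ w) ≤ evNorm w := by
  set p := Aᵀ *ᵥ w
  have hsq : evNorm p ^ 2 ≤ evNorm p * evNorm w :=
    calc evNorm p ^ 2 = (A *ᵥ p) ⬝ᵥ w := by
          rw [evNorm_sq, dotProduct_mulVec, vecMul_transpose]
      _ ≤ evNorm (A *ᵥ p) * evNorm w := dotProduct_le_evNorm_mul_evNorm _ _
      _ = evNorm p * evNorm w := by rw [evNorm_mulVec_of_transpose_mul_self hA]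
  nlinarith [evNorm_nonneg p, evNorm_nonneg w]

end EuclideanNorm

lemma transpose_mul_self_submatrix_eq_one {n k : Type*} [Fintype n] [DecidableEq n]
    [Fintype k] [DecidableEq k] {U : Matrix n n ℝ} (hU : Uᵀ * U = 1) {e : k → n}
    (he : Function.Injective e) : (U.submatrix id e)ᵀ * U.submatrix id e = 1 := by
  rw [transpose_submatrix, ← submatrix_mul _ _ _ _ _ Function.bijective_id, hU,
    submatrix_one e he]

section TruncatedInverse

variable {m k : Type*} [Fintype m] [Fintype k] [DecidableEq k] {c : ℝ} {μ : k → ℝ}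

lemma inv_diagonal_of_ne_zero (hμ : ∀ i, μ i ≠ 0) : (diagonal μ)⁻¹ = diagonal μ⁻¹ := by
  refine inv_eq_right_inv ?_
  rw [diagonal_mul_diagonal, ← diagonal_one]
  exact congrArg diagonal (funext fun i => mul_inv_cancel₀ (hμ i))

lemma evNorm_inv_diagonal_mulVec_le (hc : 0 < c) (hμ : ∀ i, c ≤ μ i) (a : k → ℝ) :
    evNorm ((diagonal μ)⁻¹ *ᵥ a) ≤ c⁻¹ * evNorm a := by
  have hμ₀ : ∀ i, 0 < μ i := fun i => hc.trans_le (hμ i)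
  rw [inv_diagonal_of_ne_zero fun i => (hμ₀ i).ne', evNorm, evNorm,
    ← Real.sqrt_sq (inv_nonneg.mpr hc.le), ← Real.sqrt_mul (by positivity), Finset.mul_sum]
  refine Real.sqrt_le_sqrt (Finset.sum_le_sum fun i _ => ?_)
  rw [mulVec_diagonal, Pi.inv_apply, mul_pow]
  gcongr
  · exact inv_nonneg.mpr (hμ₀ i).le
  · exact hμ i

lemma evNorm_truncatedInverse_mulVec_le {A : Matrix m k ℝ} (hA : Aᵀ * A = 1) (hc : 0 < c)
    (hμ : ∀ i, c ≤ μ i) (w : m → ℝ) :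
    evNorm ((A * (diagonal μ)⁻¹ * Aᵀ) *ᵥ w) ≤ c⁻¹ * evNorm w := by
  rw [← mulVec_mulVec, ← mulVec_mulVec, evNorm_mulVec_of_transpose_mul_self hA]
  calc evNorm ((diagonal μ)⁻¹ *ᵥ Aᵀ *ᵥ w) ≤ c⁻¹ * evNorm (Aᵀ *ᵥ w) :=
        evNorm_inv_diagonal_mulVec_le hc hμ _
    _ ≤ c⁻¹ * evNorm w := by gcongr; exact evNorm_transpose_mulVec_le hA w

end TruncatedInverse

lemma residual_eq_noise {ι n : Type*} [Fintype ι] [Fintype n] (z ε x : ι → n → ℝ) (y : ι → ℝ)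
    (E : ι → Matrix n n ℝ) (θ : n → ℝ) (hx : ∀ τ, x τ = z τ + ε τ) :
    ∑ τ, y τ • x τ - (∑ τ, (vecMulVec (x τ) (x τ) - E τ)) *ᵥ θ =
      ∑ τ, (y τ - z τ ⬝ᵥ θ) • x τ - (∑ τ, vecMulVec (z τ) (ε τ)) *ᵥ θ -
        (∑ τ, (vecMulVec (ε τ) (ε τ) - E τ)) *ᵥ θ := by
  simp only [sum_mulVec, sub_mulVec, vecMulVec_mulVec, op_smul_eq_smul, ← Finset.sum_sub_distrib]
  refine Finset.sum_congr rfl fun τ _ => ?_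
  rw [hx τ, add_dotProduct]
  module

theorem stmt_7_general {d t : ℕ} (c : ℝ) (hc : 0 < c)
    (z ε : Fin t → Fin d → ℝ) (y : Fin t → ℝ) (E : Fin t → Matrix (Fin d) (Fin d) ℝ)
    (θ : Fin d → ℝ) (hθ : evNorm θ ≤ 1)
    (x : Fin t → Fin d → ℝ) (hx : ∀ τ, x τ = z τ + ε τ)
    (Z : Matrix (Fin d) (Fin d) ℝ)
    (hZ : Z = ∑ τ, (Matrix.vecMulVec (x τ) (x τ) - E τ))
    (Y : Fin d → ℝ) (hY : Y = ∑ τ, y τ • x τ)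
    (N₁ : Matrix (Fin d) (Fin d) ℝ)
    (hN₁ : N₁ = ∑ τ, Matrix.vecMulVec (z τ) (ε τ))
    (N₂ : Matrix (Fin d) (Fin d) ℝ)
    (hN₂ : N₂ = ∑ τ, (Matrix.vecMulVec (ε τ) (ε τ) - E τ))
    (N₃ : Fin d → ℝ) (hN₃ : N₃ = ∑ τ, (y τ - z τ ⬝ᵥ θ) • x τ)
    (U : Matrix (Fin d) (Fin d) ℝ) (lam : Fin d → ℝ)
    (hU : Uᵀ * U = 1)
    (S : Finset (Fin d)) (hS : ∀ i ∈ S, c ≤ lam i)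
    (US : Matrix (Fin d) S ℝ) (hUS : US = U.submatrix id (fun i : S => (i : Fin d)))
    (ΛS : Matrix S S ℝ) (hΛS : ΛS = Matrix.diagonal (fun i : S => lam i)) :
    evNorm ((US * ΛS⁻¹ * USᵀ) *ᵥ (Y - Z *ᵥ θ)) ≤
      c⁻¹ * (specNorm N₁ + specNorm N₂ + evNorm N₃) := by
  have hUSo : USᵀ * US = 1 := hUS ▸ transpose_mul_self_submatrix_eq_one hU Subtype.val_injective
  rw [hY, hZ, residual_eq_noise z ε x y E θ hx, ← hN₁, ← hN₂, ← hN₃, hΛS]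
  calc _ ≤ c⁻¹ * evNorm (N₃ - N₁ *ᵥ θ - N₂ *ᵥ θ) :=
        evNorm_truncatedInverse_mulVec_le hUSo hc (fun i => hS i i.2) _
    _ ≤ c⁻¹ * (specNorm N₁ + specNorm N₂ + evNorm N₃) := by
        gcongr
        have h₁ := evNorm_mulVec_le_specNorm N₁ hθ
        have h₂ := evNorm_mulVec_le_specNorm N₂ hθ
        linarith [evNorm_sub_le (N₃ - N₁ *ᵥ θ) (N₂ *ᵥ θ), evNorm_sub_le N₃ (N₁ *ᵥ θ)]

/-- eq. (eq:UDUs) of the paper. With the NLinRel statistics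
`Z = Σ_τ (x_τ x_τᵀ − E_τ)`, `Y = Σ_τ y_τ x_τ` (where `x_τ = z_τ + ε_τ`), the noise martingales
`N₁ = Σ_τ z_τ ε_τᵀ`, `N₂ = Σ_τ (ε_τ ε_τᵀ − E_τ)`, `N₃ = Σ_τ (y_τ − z_τᵀθ) x_τ`, `‖θ‖₂ ≤ 1`,
and an eigendecomposition `Z = U Λ Uᵀ` whose eigenvalues indexed by `S` are at least `c > 0`,
one has `‖U_S Λ_S⁻¹ U_Sᵀ (Y − Zθ)‖₂ ≤ c⁻¹ (‖N₁‖₂ + ‖N₂‖₂ + ‖N₃‖₂)`. -/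
theorem stmt_7 {d t : ℕ} (hd : 1 ≤ d) (ht : 1 ≤ t) (c : ℝ) (hc : 0 < c)
    (z ε : Fin t → Fin d → ℝ) (y : Fin t → ℝ) (E : Fin t → Matrix (Fin d) (Fin d) ℝ)
    (θ : Fin d → ℝ) (hθ : evNorm θ ≤ 1)
    (x : Fin t → Fin d → ℝ) (hx : ∀ τ, x τ = z τ + ε τ)
    (Z : Matrix (Fin d) (Fin d) ℝ)
    (hZ : Z = ∑ τ, (Matrix.vecMulVec (x τ) (x τ) - E τ))
    (Y : Fin d → ℝ) (hY : Y = ∑ τ, y τ • x τ)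
    (N₁ : Matrix (Fin d) (Fin d) ℝ)
    (hN₁ : N₁ = ∑ τ, Matrix.vecMulVec (z τ) (ε τ))
    (N₂ : Matrix (Fin d) (Fin d) ℝ)
    (hN₂ : N₂ = ∑ τ, (Matrix.vecMulVec (ε τ) (ε τ) - E τ))
    (N₃ : Fin d → ℝ) (hN₃ : N₃ = ∑ τ, (y τ - z τ ⬝ᵥ θ) • x τ)
    (U Λ : Matrix (Fin d) (Fin d) ℝ) (lam : Fin d → ℝ)
    (hΛ : Λ = Matrix.diagonal lam)
    (hU : Uᵀ * U = 1) (hZdec : Z = U * Λ * Uᵀ)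
    (S : Finset (Fin d)) (hS : ∀ i ∈ S, c ≤ lam i)
    (US : Matrix (Fin d) S ℝ) (hUS : US = U.submatrix id (fun i : S => (i : Fin d)))
    (ΛS : Matrix S S ℝ) (hΛS : ΛS = Matrix.diagonal (fun i : S => lam i)) :
    evNorm ((US * ΛS⁻¹ * USᵀ) *ᵥ (Y - Z *ᵥ θ)) ≤
      c⁻¹ * (specNorm N₁ + specNorm N₂ + evNorm N₃) :=
  stmt_7_general c hc z ε y E θ hθ x hx Z hZ Y hY N₁ hN₁ N₂ hN₂ N₃ hN₃ U lam hU S hS US hUS ΛS hΛS
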